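/- arXiv:2004.01348 — 2 statements merged into one kernel-verified Lean document; each statement's English description precedes it below -/
import Mathlib

section
/- Suppose an agent's optimal bundle (a maximizer of sum_j u_{ij} x_{ij} subject to size 1, cost ≤ 1, x ≥ 0) has dual variables α_i > 0 and all optimal goods (goods j with α_i p_j + μ_i = u_{ij}) have the same utility value. Then every optimal good has price exactly 1. -/
/-! All optimal goods share one utility, hence (as `α ≠ 0`) one price; the bundle is supported
on optimal goods, so its cost is that common price times its size `1`. -/

theorem Finset.sum_mul_eq_mul_sum_of_ne_zero {ι R : Type*} [NonUnitalNonAssocSemiring R]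
    (s : Finset ι) {p x : ι → R} {c : R} (h : ∀ i ∈ s, x i ≠ 0 → p i = c) :
    ∑ i ∈ s, p i * x i = c * ∑ i ∈ s, x i := by
  rw [Finset.mul_sum]
  refine Finset.sum_congr rfl fun i hi => ?_
  by_cases hx : x i = 0
  · simp only [hx, mul_zero]
  · rw [h i hi hx]

theorem typeC_optimal_goods_price_one_general
    (n : ℕ) (u p x : Fin n → ℝ) (α μ : ℝ)
    (hα : 0 < α)
    (hxnn : ∀ j, 0 ≤ x j)
    (hsize : ∑ j, x j = 1)
    (hcost : ∑ j, p j * x j = 1)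
    (hcs : ∀ j, 0 < x j → α * p j + μ = u j)
    (hsame : ∀ j k, α * p j + μ = u j → α * p k + μ = u k → u j = u k) :
    ∀ j, α * p j + μ = u j → p j = 1 := by
  intro j hj
  have hprice : ∀ i, x i ≠ 0 → p i = p j := fun i hi => by
    have hopt := hcs i ((hxnn i).lt_of_ne' hi)
    have hu := hsame i j hopt hj
    exact mul_left_cancel₀ hα.ne' (by linarith)
  calc p j = p j * ∑ i, x i := by rw [hsize, mul_one]
    _ = ∑ i, p i * x i := (Finset.sum_mul_eq_mul_sum_of_ne_zero _ fun i _ => hprice i).symm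
    _ = 1 := hcost

/-- Type C bundle characterization: if `α > 0` and all optimal goods (those with
`α * p j + μ = u j`) have the same utility, then every optimal good has price 1.
Here `x` is the agent's optimal bundle: supported on optimal goods, of size 1 and
(by complementary slackness, `α > 0`) cost exactly 1. -/
theorem typeC_optimal_goods_price_one
    (n : ℕ) (hn : 0 < n) (u p x : Fin n → ℝ) (α μ : ℝ)
    (hα : 0 < α)
    (hdualfeas : ∀ j, u j ≤ α * p j + μ)
    (hxnn : ∀ j, 0 ≤ x j)
    (hsize : ∑ j, x j = 1)
    (hcost : ∑ j, p j * x j = 1)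
    (hcs : ∀ j, 0 < x j → α * p j + μ = u j)
    (hsame : ∀ j k, α * p j + μ = u j → α * p k + μ = u k → u j = u k) :
    ∀ j, α * p j + μ = u j → p j = 1 :=
  typeC_optimal_goods_price_one_general n u p x α μ hα hxnn hsize hcost hcs hsame
end

section
/- Let y = (1 + √17)/8, r₂ = y², r₃ = y, r₄ = 2 − 3y². Then the system of equations r₃² = r₂, r₂ + r₄ = 2(1 − r₂), and (1 − r₂)r₂ + (r₄ − 1)(r₂ + r₃) = 0 is satisfied, and moreover 0 < r₂ < 1, 0 < r₃ < 1, 0 < r₄. -/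
/-! `y = (1 + √17)/8` is the positive root of `4y² = y + 1`. Modulo this relation the first two
equations are identities and the third factors as `-y (y + 1) (4y² - y - 1) = 0`; the ranges
follow from `1/2 < y < 3/4`, i.e. from `4 < √17 < 5`. -/

lemma four_mul_sq_eq_add_one_of_eq {y : ℝ} (hy : y = (1 + √17) / 8) : 4 * y ^ 2 = y + 1 := by
  have hsq : √17 ^ 2 = 17 := Real.sq_sqrt (by norm_num)
  subst hy
  linear_combination hsq / 16

lemma half_lt_and_lt_three_quarters_of_eq {y : ℝ} (hy : y = (1 + √17) / 8) :
    1 / 2 < y ∧ y < 3 / 4 := by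
  have hlo : 4 < √17 := (Real.lt_sqrt (by norm_num)).2 (by norm_num)
  have hhi : √17 < 5 := (Real.sqrt_lt' (by norm_num)).2 (by norm_num)
  constructor <;> linarith

/-- Case 1 equilibrium of the irrational example: with `y = (1+√17)/8`, `r₂ = y²`,
`r₃ = y`, `r₄ = 2 − 3y²`, the equilibrium system is satisfied and the `rᵢ` lie in
the required ranges. -/
theorem case1_equilibrium_system :
    ∀ y r₂ r₃ r₄ : ℝ,
      y = (1 + Real.sqrt 17) / 8 → r₂ = y ^ 2 → r₃ = y → r₄ = 2 - 3 * y ^ 2 →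
      r₃ ^ 2 = r₂ ∧
      r₂ + r₄ = 2 * (1 - r₂) ∧
      (1 - r₂) * r₂ + (r₄ - 1) * (r₂ + r₃) = 0 ∧
      0 < r₂ ∧ r₂ < 1 ∧ 0 < r₃ ∧ r₃ < 1 ∧ 0 < r₄ := by
  intro y r₂ r₃ r₄ hy h₂ h₃ h₄
  subst r₂ r₃ r₄
  have hroot := four_mul_sq_eq_add_one_of_eq hy
  obtain ⟨hlo, hhi⟩ := half_lt_and_lt_three_quarters_of_eq hy
  refine ⟨rfl, by ring, by linear_combination (-y * (y + 1)) * hroot, by positivity,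
    by nlinarith, by linarith, by linarith, by nlinarith⟩
end
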